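/- For the pure state |ψ⟩ = cos(θ/2)|00⟩ + sin(θ/2)|11⟩, the correlation matrix C has singular values 1, sin θ, sin θ, so the teleportation fidelity equals (1/2)(1 + (1 + 2 sin θ)/3) = (2 + sin θ)/3; hence F > 2/3 if and only if the state is entangled. -/

import Mathlib

open Real Matrix

noncomputable section

/-- The two-qubit pure state cos(θ/2)|00⟩ + sin(θ/2)|11⟩ as a vector. -/
def psi (θ : ℝ) : (Fin 2 × Fin 2) → ℂ := fun p =>
  if p = (0, 0) then (Real.cos (θ / 2) : ℂ)
  else if p = (1, 1) then (Real.sin (θ / 2) : ℂ) else 0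

/-- The density matrix |ψ⟩⟨ψ|. -/
def rhoPure (θ : ℝ) : Matrix (Fin 2 × Fin 2) (Fin 2 × Fin 2) ℂ :=
  Matrix.vecMulVec (psi θ) (star (psi θ))

/-- The three Pauli matrices. -/
def pauli : Fin 3 → Matrix (Fin 2) (Fin 2) ℂ :=
  ![!![0, 1; 1, 0], !![0, -Complex.I; Complex.I, 0], !![1, 0; 0, -1]]

/-- The correlation matrix C_ij = tr[ρ (σ_i ⊗ σ_j)] of a two-qubit state. -/
def corrM (ρ : Matrix (Fin 2 × Fin 2) (Fin 2 × Fin 2) ℂ) : Matrix (Fin 3) (Fin 3) ℝ :=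
  Matrix.of fun i j =>
    (Matrix.trace (ρ * Matrix.of fun (p q : Fin 2 × Fin 2) =>
      pauli i p.1 q.1 * pauli j p.2 q.2)).re

/-- tr√(C†C): the sum of the singular values of C. -/
def trSqrt (C : Matrix (Fin 3) (Fin 3) ℝ) (h : (Cᵀ * C).IsHermitian) : ℝ :=
  ∑ i, Real.sqrt (h.eigenvalues i)

lemma trace_eq_sum_eigenvalues {n : Type*} [Fintype n] [DecidableEq n]
    {A : Matrix n n ℝ} (hA : A.IsHermitian) :
    A.trace = ∑ i, hA.eigenvalues i := by
  simpa using hA.trace_eq_sum_eigenvalues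

lemma corr_eq (θ : ℝ) : corrM (rhoPure θ) =
    Matrix.of ![![Real.sin θ, 0, 0], ![0, -Real.sin θ, 0], ![0, 0, 1]] := by
  have h2 : 2 * Real.sin (θ/2) * Real.cos (θ/2) = Real.sin θ := by
    rw [← Real.sin_two_mul]; ring_nf
  have h3 : Real.cos (θ/2)^2 + Real.sin (θ/2)^2 = 1 := by
    rw [add_comm]; exact Real.sin_sq_add_cos_sq _
  ext i j
  fin_cases i <;> fin_cases j <;>
    simp [corrM, rhoPure, psi, pauli, Matrix.trace, Matrix.mul_apply, Matrix.vecMulVec_apply,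
      Fin.sum_univ_succ, Fintype.sum_prod_type, Complex.ext_iff, Prod.ext_iff,
      ← Complex.ofReal_div, Complex.cos_ofReal_re, Complex.sin_ofReal_re,
      Complex.cos_ofReal_im, Complex.sin_ofReal_im, Matrix.vecHead, Matrix.vecTail] <;>
    nlinarith [h2, h3]

lemma ctc_eq (θ : ℝ) : (corrM (rhoPure θ))ᵀ * corrM (rhoPure θ)
    = Matrix.diagonal ![Real.sin θ ^ 2, Real.sin θ ^ 2, 1] := by
  rw [corr_eq]
  ext i j
  fin_cases i <;> fin_cases j <;>
    simp [Matrix.mul_apply, Matrix.diagonal, Fin.sum_univ_succ, Matrix.vecHead,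
      Matrix.vecTail] <;> ring

theorem pure_state_teleportation (θ : ℝ) (hθ : 0 ≤ θ) (hθ' : θ ≤ π)
    (h : ((corrM (rhoPure θ))ᵀ * corrM (rhoPure θ)).IsHermitian) :
    (Finset.univ.val.map fun i => Real.sqrt (h.eigenvalues i))
        = ({1, Real.sin θ, Real.sin θ} : Multiset ℝ)
    ∧ (1 / 2) * (1 + trSqrt (corrM (rhoPure θ)) h / 3) = (2 + Real.sin θ) / 3
    ∧ (2 / 3 < (1 / 2) * (1 + trSqrt (corrM (rhoPure θ)) h / 3) ↔ 0 < θ ∧ θ < π) := by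
  set s := Real.sin θ with hsdef
  have hs : 0 ≤ s := Real.sin_nonneg_of_nonneg_of_le_pi hθ hθ'
  have hsq : Real.sqrt (s ^ 2) = s := Real.sqrt_sq hs
  have hmem : ∀ i, h.eigenvalues i = s ^ 2 ∨ h.eigenvalues i = 1 := by
    intro i
    have hm' : h.eigenvalues i ∈ spectrum ℝ (Matrix.diagonal ![s ^ 2, s ^ 2, 1]) := by
      rw [← ctc_eq]; exact h.eigenvalues_mem_spectrum_real i
    rw [spectrum_diagonal] at hm'
    obtain ⟨j, hj⟩ := hm'
    fin_cases j <;> simp at hj <;> tauto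
  have htrace : ((corrM (rhoPure θ))ᵀ * corrM (rhoPure θ)).trace = s ^ 2 + s ^ 2 + 1 := by
    rw [ctc_eq, Matrix.trace_diagonal, Fin.sum_univ_three]; simp [hsdef]
  have hsum : h.eigenvalues 0 + h.eigenvalues 1 + h.eigenvalues 2 = s ^ 2 + s ^ 2 + 1 := by
    have ht := trace_eq_sum_eigenvalues h
    rw [htrace, Fin.sum_univ_three] at ht
    linarith
  have perm1 : ∀ a b : ℝ, ({a, b, b} : Multiset ℝ) = {b, a, b} :=
    fun a b => Multiset.cons_swap a b _
  have perm2 : ∀ a b : ℝ, ({b, b, a} : Multiset ℝ) = {a, b, b} := by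
    intro a b
    show b ::ₘ b ::ₘ a ::ₘ 0 = a ::ₘ b ::ₘ b ::ₘ 0
    rw [Multiset.cons_swap b a, Multiset.cons_swap b a]
  have hms : (Finset.univ.val.map fun i => Real.sqrt (h.eigenvalues i))
      = ({1, s, s} : Multiset ℝ) := by
    have huniv : (Finset.univ.val.map fun i => Real.sqrt (h.eigenvalues i))
        = {Real.sqrt (h.eigenvalues 0), Real.sqrt (h.eigenvalues 1),
           Real.sqrt (h.eigenvalues 2)} := rfl
    rw [huniv]
    rcases hmem 0 with h0 | h0 <;> rcases hmem 1 with h1 | h1 <;>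
      rcases hmem 2 with h2 | h2 <;> rw [h0, h1, h2] <;> rw [h0, h1, h2] at hsum
    · -- s², s², s²
      have hs1 : s = 1 := by
        have hz : (s - 1) * (s + 1) = 0 := by nlinarith
        rcases mul_eq_zero.mp hz with hz | hz <;> [linarith; linarith]
      rw [hsq, hs1]
    · -- s², s², 1
      rw [hsq, Real.sqrt_one]; exact perm2 1 s
    · -- s², 1, s²
      rw [hsq, Real.sqrt_one]; exact (perm1 1 s).symm
    · -- s², 1, 1
      have hs1 : s = 1 := by
        have hz : (s - 1) * (s + 1) = 0 := by nlinarith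
        rcases mul_eq_zero.mp hz with hz | hz <;> [linarith; linarith]
      rw [hsq, Real.sqrt_one, hs1]
    · -- 1, s², s²
      rw [hsq, Real.sqrt_one]
    · -- 1, s², 1
      have hs1 : s = 1 := by
        have hz : (s - 1) * (s + 1) = 0 := by nlinarith
        rcases mul_eq_zero.mp hz with hz | hz <;> [linarith; linarith]
      rw [hsq, Real.sqrt_one, hs1]
    · -- 1, 1, s²
      have hs1 : s = 1 := by
        have hz : (s - 1) * (s + 1) = 0 := by nlinarith
        rcases mul_eq_zero.mp hz with hz | hz <;> [linarith; linarith]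
      rw [hsq, Real.sqrt_one, hs1]
    · -- 1, 1, 1
      have hs1 : s = 1 := by
        have hz : (s - 1) * (s + 1) = 0 := by nlinarith
        rcases mul_eq_zero.mp hz with hz | hz <;> [linarith; linarith]
      rw [Real.sqrt_one, hs1]
  have htr : trSqrt (corrM (rhoPure θ)) h = 1 + s + s := by
    have heq : trSqrt (corrM (rhoPure θ)) h
        = ((Finset.univ.val.map fun i => Real.sqrt (h.eigenvalues i)) : Multiset ℝ).sum := rfl
    rw [heq, hms]
    simp [Multiset.sum_cons]; ring
  refine ⟨hms, by rw [htr]; ring, ?_⟩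
  rw [htr]
  constructor
  · intro hlt
    have hspos : 0 < s := by nlinarith
    constructor
    · rcases lt_or_eq_of_le hθ with h' | h'
      · exact h'
      · exfalso
        have hz : s = 0 := by rw [hsdef, ← h', Real.sin_zero]
        linarith
    · rcases lt_or_eq_of_le hθ' with h' | h'
      · exact h'
      · exfalso
        have hz : s = 0 := by rw [hsdef, h', Real.sin_pi]
        linarith
  · rintro ⟨h1, h2⟩
    have := Real.sin_pos_of_pos_of_lt_pi h1 h2
    nlinarith

end
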